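/- Fix a directed edge e and let S be the set of rooted loops that visit both e and −e at least once. For ℓ ∈ S of length n, let l be the smallest index with ℓ_l = e or ℓ_l = −e, let m be the largest index with ℓ_m = −ℓ_l, and define ℓ' = ℓ_{1,l} ⊕ (ℓ_{l,m})⁻¹ ⊕ ℓ_{m,n+1}. Then the map ℓ ↦ ℓ' is an involution of S, |ℓ'| = |ℓ|, and λ(ℓ') = −λ(ℓ). -/

import Mathlib

open scoped BigOperators

/-- The straight line segment drawn for an (unordered) edge, given the
positions of the vertices in the complex plane. -/
def segOf {α : Type*} (pos : α → ℂ) : Sym2 α → Set ℂ :=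
  Sym2.lift ⟨fun u v => segment ℝ (pos u) (pos v), fun u v => segment_symm ℝ (pos u) (pos v)⟩

/-- A finite graph embedded in the complex plane: vertices are distinct points
of `ℂ`, edges are unordered pairs of distinct vertices drawn as straight line
segments which pairwise intersect only at common endpoints, and no vertex lies
on an edge which does not contain it. -/
structure PlaneGraph where
  V : Type
  fintypeV : Fintype V
  decEqV : DecidableEq V
  pos : V → ℂ
  pos_inj : Function.Injective pos
  E : Finset (Sym2 V)
  not_diag : ∀ e ∈ E, ¬ e.IsDiag
  edges_meet : ∀ e₁ ∈ E, ∀ e₂ ∈ E, e₁ ≠ e₂ → ∀ p : ℂ,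
    p ∈ segOf pos e₁ → p ∈ segOf pos e₂ → ∃ w : V, w ∈ e₁ ∧ w ∈ e₂ ∧ p = pos w
  vertex_on_edge : ∀ e ∈ E, ∀ w : V, pos w ∈ segOf pos e → w ∈ e

attribute [instance] PlaneGraph.fintypeV PlaneGraph.decEqV

namespace PlaneGraph

variable (G : PlaneGraph)

/-- A directed edge: an ordered pair of vertices whose underlying
unordered pair is an edge of the graph. -/
abbrev DEdge : Type := {p : G.V × G.V // s(p.1, p.2) ∈ G.E}

/-- The reversal `-e` of a directed edge. -/
def rev (e : G.DEdge) : G.DEdge :=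
  ⟨(e.val.2, e.val.1), by rw [Sym2.eq_swap]; exact e.property⟩

/-- The undirected version `ē` of a directed edge. -/
def undir (e : G.DEdge) : Sym2 G.V := s(e.val.1, e.val.2)

/-- The turning angle `∠(e,g) = Arg((h_g - t_g)/(h_e - t_e)) ∈ (-π, π]`. -/
noncomputable def tangle (e g : G.DEdge) : ℝ :=
  Complex.arg ((G.pos g.val.2 - G.pos g.val.1) / (G.pos e.val.2 - G.pos e.val.1))

/-- The Kac–Ward transition matrix `Λ`, indexed by directed edges. -/
noncomputable def transMatrix (x : Sym2 G.V → ℝ) : Matrix G.DEdge G.DEdge ℂ :=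
  fun e g =>
    if e.val.2 = g.val.1 ∧ g ≠ G.rev e then
      (x (G.undir e) : ℂ) * Complex.exp (Complex.I / 2 * (G.tangle e g : ℂ))
    else 0

/-- A non-backtracking walk of length `n ≥ 1`, encoded as the list
`(w₁, …, w_{n+1})` of its `n+1` directed edges: consecutive edges are
incident head-to-tail and the walk never immediately reverses an edge. -/
def IsWalk (l : List G.DEdge) : Prop :=
  2 ≤ l.length ∧ l.Chain' (fun e g => e.val.2 = g.val.1 ∧ g ≠ G.rev e)

/-- The length `|w|` (number of steps) of a walk given as a list of edges. -/
def len (l : List G.DEdge) : ℕ := l.length - 1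

/-- The weight `λ(w) = ∏_{i=1}^{n} Λ_{w_i, w_{i+1}}` of a walk. -/
noncomputable def wlam (x : Sym2 G.V → ℝ) (l : List G.DEdge) : ℂ :=
  (List.zipWith (fun e g => G.transMatrix x e g) l l.tail).prod

/-- The edge weight `x(w) = ∏_{i=1}^{n} x_{\bar{w_i}}` of a walk
(the weight of the last edge is not included). -/
def wx (x : Sym2 G.V → ℝ) (l : List G.DEdge) : ℝ :=
  (l.dropLast.map (fun e => x (G.undir e))).prod

/-- The total turning angle `α(w) = Σ_{i=1}^{n} ∠(w_i, w_{i+1})` of a walk. -/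
noncomputable def walpha (l : List G.DEdge) : ℝ :=
  (List.zipWith (fun e g => G.tangle e g) l l.tail).sum

/-- The reversal `w⁻¹ = (-w_{n+1}, …, -w₁)` of a walk. -/
def wrev (l : List G.DEdge) : List G.DEdge := (l.map G.rev).reverse

/-- The concatenation `w ⊕ w'` of two walks, the first ending with the
directed edge with which the second starts. -/
def wconcat (l l' : List G.DEdge) : List G.DEdge := l ++ l'.tail

/-- A (rooted) loop: a walk of length at least `2` which starts and ends
with the same directed edge. -/
def IsLoop (l : List G.DEdge) : Prop :=
  G.IsWalk l ∧ 3 ≤ l.length ∧ l.head? = l.getLast?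

/-- The number of times a loop `ℓ = (ℓ₁, …, ℓ_{n+1})` visits a directed
edge `e`, i.e. the number of occurrences of `e` among `ℓ₁, …, ℓ_n`. -/
def visits (l : List G.DEdge) (e : G.DEdge) : ℕ := l.dropLast.count e

/-- A loop `ℓ` of length `n` is self-avoiding if each vertex appearing in it
appears in exactly two of the directed edges `ℓ₁, …, ℓ_n`. -/
def SelfAvoiding (l : List G.DEdge) : Prop :=
  G.IsLoop l ∧ ∀ v : G.V,
    l.dropLast.countP (fun e => decide (v = e.val.1 ∨ v = e.val.2)) ≠ 0 →
    l.dropLast.countP (fun e => decide (v = e.val.1 ∨ v = e.val.2)) = 2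

/-- The degree of a vertex: the number of edges containing it. -/
def degV (v : G.V) : ℕ := (G.E.filter (fun e => v ∈ e)).card

/-- A finite set of edges is even if every vertex belongs to an even number
of its edges. -/
def IsEvenSet (H : Finset (Sym2 G.V)) : Prop :=
  ∀ v : G.V, Even ((H.filter (fun e => v ∈ e)).card)

instance : DecidablePred G.IsEvenSet := fun H =>
  decidable_of_iff (∀ v : G.V, Even ((H.filter (fun e => v ∈ e)).card)) Iff.rfl

/-- The generating function `Z = Σ_{H even} ∏_{ē ∈ H} x_ē` of even
subgraphs. -/
def Z (x : Sym2 G.V → ℝ) : ℝ :=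
  ∑ H ∈ G.E.powerset.filter G.IsEvenSet, ∏ e ∈ H, x e

end PlaneGraph

namespace PlaneGraph

variable (G : PlaneGraph)

/-- For a loop `ℓ` visiting both `e` and `-e`: let `l` (here `i`, 0-indexed)
be the smallest index with `ℓ_l = e` or `ℓ_l = -e`, let `m` (here `j`,
0-indexed) be the largest index with `ℓ_m = -ℓ_l`, and form
`ℓ' = ℓ_{1,l} ⊕ (ℓ_{l,m})⁻¹ ⊕ ℓ_{m,n+1}`. -/
def flipLoop (e : G.DEdge) (l : List G.DEdge) : List G.DEdge :=
  let i := l.findIdx (fun g => decide (g = e ∨ g = G.rev e))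
  let t := l.getD i e
  let j := l.length - 1 - l.reverse.findIdx (fun g => decide (g = G.rev t))
  G.wconcat (G.wconcat (l.take (i + 1)) (G.wrev ((l.drop i).take (j - i + 1))))
    (l.drop j)

end PlaneGraph

/-!
Decompose `ℓ = A ++ t :: (B ++ -t :: C)`, where `t ∈ {e, -e}` is the first visit to `±e` and the
displayed `-t` is the last visit to `-t`. Then `ℓ' = A ++ t :: (B⁻¹ ++ -t :: C)` has a decomposition
of the same kind, so flipping again restores `ℓ`. The weight factors along the decomposition, and
on a walk `w` it equals `x(w) e^{iα(w)/2}` with `α(w)` the total turning angle. Reversing the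
middle walk `t B -t` keeps `x` and negates `α` (turning angles are never `π` in a plane graph, so
`Arg` is odd on them), while `e^{iα}` of a walk from `t` to `-t` is the ratio of the unit directions
of its ends, i.e. `-1`. Hence the middle factor, and the weight, changes sign.
-/

theorem List.zipWith_tail_append_cons {α β : Type*} (f : α → α → β) (A R : List α) (t : α) :
    zipWith f (A ++ t :: R) (A ++ t :: R).tail =
      zipWith f (A ++ [t]) (A ++ [t]).tail ++ zipWith f (t :: R) R := by
  induction A with
  | nil => simp
  | cons a A ih => cases A <;> simp_all

namespace PlaneGraph

variable (G : PlaneGraph)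

abbrev Step (a b : G.DEdge) : Prop := a.val.2 = b.val.1 ∧ b ≠ G.rev a

@[simp] lemma rev_rev (a : G.DEdge) : G.rev (G.rev a) = a := rfl

lemma fst_ne_snd (a : G.DEdge) : a.val.1 ≠ a.val.2 :=
  Sym2.mk_isDiag_iff.not.mp (G.not_diag _ a.property)

lemma rev_ne_self (a : G.DEdge) : G.rev a ≠ a := fun h =>
  G.fst_ne_snd a (congrArg (fun z : G.DEdge => z.val.2) h)

@[simp] lemma undir_rev (a : G.DEdge) : G.undir (G.rev a) = G.undir a := by
  simp [undir, rev, Sym2.eq_swap]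

noncomputable def dir (a : G.DEdge) : ℂ := G.pos a.val.2 - G.pos a.val.1

lemma dir_ne_zero (a : G.DEdge) : G.dir a ≠ 0 :=
  sub_ne_zero.mpr fun h => G.fst_ne_snd a (G.pos_inj h).symm

@[simp] lemma dir_rev (a : G.DEdge) : G.dir (G.rev a) = -G.dir a := by
  simp [dir, rev]

lemma Step.rev {a b : G.DEdge} (h : G.Step a b) : G.Step (G.rev b) (G.rev a) :=
  ⟨h.1.symm, fun hba => h.2 (by simpa using hba.symm)⟩

/-- The head of `b` is a vertex on the segment of `a`. -/
lemma eq_rev_of_dir_eq_neg_mul {a b : G.DEdge} (hab : a.val.2 = b.val.1) {c : ℝ}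
    (hc₀ : 0 ≤ c) (hc₁ : c ≤ 1) (h : G.dir b = -(c : ℂ) * G.dir a) : b = G.rev a := by
  have hmem : G.pos b.val.2 ∈ segOf G.pos s(a.val.1, a.val.2) := by
    refine ⟨c, 1 - c, hc₀, by linarith, by ring, ?_⟩
    have : G.pos b.val.2 = G.pos a.val.2 + G.dir b := by rw [dir, ← hab]; ring
    rw [this, h, dir]
    simp only [Complex.real_smul]
    push_cast
    ring
  rcases Sym2.mem_iff.mp (G.vertex_on_edge _ a.property _ hmem) with h₁ | h₂
  · exact Subtype.ext (Prod.ext hab.symm h₁)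
  · exact absurd (hab.symm.trans h₂.symm) (G.fst_ne_snd b)

lemma tangle_ne_pi {a b : G.DEdge} (h : G.Step a b) : G.tangle a b ≠ Real.pi := by
  intro hpi
  obtain ⟨hre, him⟩ : (G.dir b / G.dir a).re < 0 ∧ (G.dir b / G.dir a).im = 0 :=
    Complex.arg_eq_pi_iff.mp hpi
  set c : ℝ := -(G.dir b / G.dir a).re
  have hc : 0 < c := neg_pos.mpr hre
  have hba : G.dir b = -(c : ℂ) * G.dir a := by
    rw [← div_mul_cancel₀ (G.dir b) (G.dir_ne_zero a)]
    congr 1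
    exact Complex.ext (by simp [c]) (by simpa [c] using him)
  rcases le_total c 1 with hc₁ | hc₁
  · exact h.2 (G.eq_rev_of_dir_eq_neg_mul h.1 hc.le hc₁ hba)
  · -- otherwise the tail of `a` lies on the segment of `b`: reverse both edges
    have hab : G.dir (G.rev a) = -((c⁻¹ : ℝ) : ℂ) * G.dir (G.rev b) := by
      have : (c : ℂ) ≠ 0 := by exact_mod_cast hc.ne'
      rw [dir_rev, dir_rev, hba]
      push_cast
      field_simp
    have := G.eq_rev_of_dir_eq_neg_mul h.rev.1 (inv_nonneg.mpr hc.le)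
      (inv_le_one_of_one_le₀ hc₁) hab
    exact h.2 (by simpa using this.symm)

lemma tangle_rev_rev {a b : G.DEdge} (h : G.Step a b) :
    G.tangle (G.rev b) (G.rev a) = -G.tangle a b := by
  have hne : (G.dir b / G.dir a).arg ≠ Real.pi := G.tangle_ne_pi h
  change Complex.arg (G.dir (G.rev a) / G.dir (G.rev b)) = -Complex.arg (G.dir b / G.dir a)
  rw [dir_rev, dir_rev, neg_div_neg_eq, ← inv_div, Complex.arg_inv, if_neg hne]

noncomputable def udir (a : G.DEdge) : ℂ := G.dir a / ‖G.dir a‖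

lemma udir_ne_zero (a : G.DEdge) : G.udir a ≠ 0 := by
  simp [udir, G.dir_ne_zero a]

@[simp] lemma udir_rev (a : G.DEdge) : G.udir (G.rev a) = -G.udir a := by
  simp [udir, neg_div]

lemma exp_tangle_mul_I (a b : G.DEdge) :
    Complex.exp (G.tangle a b * Complex.I) = G.udir b / G.udir a := by
  have ha := G.dir_ne_zero a
  have hb := G.dir_ne_zero b
  have hz : ((‖G.dir b / G.dir a‖ : ℝ) : ℂ) ≠ 0 := by simp [ha, hb]
  change Complex.exp ((G.dir b / G.dir a).arg * Complex.I) = _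
  rw [eq_div_iff (G.udir_ne_zero a), ← mul_right_inj' hz, ← mul_assoc,
    Complex.norm_mul_exp_arg_mul_I]
  have hb' : ((‖G.dir b‖ : ℝ) : ℂ) ≠ 0 := by simp [hb]
  simp only [udir, norm_div, Complex.ofReal_div]
  field_simp

lemma walpha_cons_cons (a b : G.DEdge) (L : List G.DEdge) :
    G.walpha (a :: b :: L) = G.tangle a b + G.walpha (b :: L) := by
  simp [walpha]

lemma walpha_append_cons (A : List G.DEdge) (t : G.DEdge) (R : List G.DEdge) :
    G.walpha (A ++ t :: R) = G.walpha (A ++ [t]) + G.walpha (t :: R) := by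
  rw [walpha, List.zipWith_tail_append_cons, List.sum_append]
  rfl

lemma walpha_wrev {L : List G.DEdge} (h : L.IsChain G.Step) :
    G.walpha (G.wrev L) = -G.walpha L := by
  induction h with
  | nil => simp [walpha, wrev]
  | singleton a => simp [walpha, wrev]
  | @cons_cons a b L hab _ ih =>
    have hab' : G.wrev (a :: b :: L) = G.wrev L ++ [G.rev b, G.rev a] := by simp [wrev]
    have hb : G.wrev (b :: L) = G.wrev L ++ [G.rev b] := by simp [wrev]
    rw [hab', walpha_append_cons, ← hb, ih, walpha_cons_cons, walpha_cons_cons,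
      G.tangle_rev_rev hab]
    simp [walpha]

lemma exp_walpha_mul_I (a z : G.DEdge) (L : List G.DEdge) :
    Complex.exp (G.walpha (a :: (L ++ [z])) * Complex.I) = G.udir z / G.udir a := by
  induction L generalizing a with
  | nil => simpa [walpha_cons_cons, walpha] using G.exp_tangle_mul_I a z
  | cons b L ih =>
    rw [List.cons_append, walpha_cons_cons, Complex.ofReal_add, add_mul, Complex.exp_add,
      exp_tangle_mul_I, ih]
    field_simp [G.udir_ne_zero b]

lemma wlam_append_cons (x : Sym2 G.V → ℝ) (A : List G.DEdge) (t : G.DEdge)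
    (R : List G.DEdge) : G.wlam x (A ++ t :: R) = G.wlam x (A ++ [t]) * G.wlam x (t :: R) := by
  rw [wlam, List.zipWith_tail_append_cons, List.prod_append]
  rfl

lemma wlam_eq_wx_mul_exp (x : Sym2 G.V → ℝ) {L : List G.DEdge} (h : L.IsChain G.Step) :
    G.wlam x L = G.wx x L * Complex.exp (Complex.I / 2 * G.walpha L) := by
  induction h with
  | nil => simp [wlam, wx, walpha]
  | singleton a => simp [wlam, wx, walpha]
  | @cons_cons a b L hab _ ih =>
    have hw : G.wlam x (a :: b :: L) = G.transMatrix x a b * G.wlam x (b :: L) := by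
      simp [wlam]
    have hx : G.wx x (a :: b :: L) = x (G.undir a) * G.wx x (b :: L) := by simp [wx]
    rw [hw, ih, hx, walpha_cons_cons, transMatrix, if_pos hab]
    push_cast
    rw [mul_add, Complex.exp_add]
    ring

lemma isChain_wrev {L : List G.DEdge} (h : L.IsChain G.Step) : (G.wrev L).IsChain G.Step := by
  rw [wrev, List.isChain_reverse, List.isChain_map]
  exact h.imp fun _ _ hab => hab.rev

lemma wrev_wrev (L : List G.DEdge) : G.wrev (G.wrev L) = L := by
  simp [wrev, Function.comp_def]

lemma wrev_cons_append_rev (t : G.DEdge) (B : List G.DEdge) :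
    G.wrev (t :: (B ++ [G.rev t])) = t :: (G.wrev B ++ [G.rev t]) := by
  simp [wrev]

lemma wlam_wrev_cons_append_rev (x : Sym2 G.V → ℝ) {t : G.DEdge} {B : List G.DEdge}
    (h : (t :: (B ++ [G.rev t])).IsChain G.Step) :
    G.wlam x (G.wrev (t :: (B ++ [G.rev t]))) = -G.wlam x (t :: (B ++ [G.rev t])) := by
  have hx : G.wx x (G.wrev (t :: (B ++ [G.rev t]))) = G.wx x (t :: (B ++ [G.rev t])) := by
    rw [wrev_cons_append_rev]
    simp only [wx, ← List.cons_append, List.dropLast_concat]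
    simp [wrev, Function.comp_def, List.prod_reverse]
  have hexp : Complex.exp (G.walpha (t :: (B ++ [G.rev t])) * Complex.I) = -1 := by
    rw [exp_walpha_mul_I, udir_rev, neg_div, div_self (G.udir_ne_zero t)]
  rw [wlam_eq_wx_mul_exp _ _ (G.isChain_wrev h), wlam_eq_wx_mul_exp _ _ h, hx, walpha_wrev _ h,
    show Complex.I / 2 * ((-G.walpha (t :: (B ++ [G.rev t])) : ℝ) : ℂ) =
      Complex.I / 2 * G.walpha (t :: (B ++ [G.rev t])) -
        G.walpha (t :: (B ++ [G.rev t])) * Complex.I by push_cast; ring,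
    Complex.exp_sub, hexp]
  ring

lemma wlam_flip (x : Sym2 G.V → ℝ) {A B C : List G.DEdge} {t : G.DEdge}
    (h : (A ++ t :: (B ++ G.rev t :: C)).IsChain G.Step) :
    G.wlam x (A ++ t :: (G.wrev B ++ G.rev t :: C)) =
      -G.wlam x (A ++ t :: (B ++ G.rev t :: C)) := by
  have hsplit : ∀ M : List G.DEdge, G.wlam x (A ++ t :: (M ++ G.rev t :: C)) =
      G.wlam x (A ++ [t]) * G.wlam x (t :: (M ++ [G.rev t])) * G.wlam x (G.rev t :: C) := by
    intro M
    rw [wlam_append_cons, mul_assoc, ← List.cons_append, wlam_append_cons G x (t :: M)]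
    rfl
  have hmid : (t :: (B ++ [G.rev t])).IsChain G.Step :=
    (List.isChain_cons_split.mp (List.isChain_split.mp h).2).1
  rw [hsplit, hsplit, ← wrev_cons_append_rev, wlam_wrev_cons_append_rev _ _ hmid]
  ring

lemma flipLoop_append {e t : G.DEdge} {A C : List G.DEdge} (B : List G.DEdge)
    (hA : ∀ g ∈ A, ¬(g = e ∨ g = G.rev e)) (ht : t = e ∨ t = G.rev e) (hC : G.rev t ∉ C) :
    G.flipLoop e (A ++ t :: (B ++ G.rev t :: C)) = A ++ t :: (G.wrev B ++ G.rev t :: C) := by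
  have hi : (A ++ t :: (B ++ G.rev t :: C)).findIdx (fun g => decide (g = e ∨ g = G.rev e)) =
      A.length := by
    rw [List.findIdx_append, List.findIdx_eq_length_of_false fun g hg => decide_eq_false (hA g hg),
      List.findIdx_cons, decide_eq_true ht]
    simp
  have hj : (A ++ t :: (B ++ G.rev t :: C)).reverse.findIdx (fun g => decide (g = G.rev t)) =
      C.length := by
    rw [show (A ++ t :: (B ++ G.rev t :: C)).reverse =
        C.reverse ++ G.rev t :: (B.reverse ++ t :: A.reverse) by simp,
      List.findIdx_append, List.findIdx_eq_length_of_false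
        fun g hg => decide_eq_false fun h : g = G.rev t => hC (h ▸ List.mem_reverse.mp hg),
      List.findIdx_cons]
    simp
  have ht' : (A ++ t :: (B ++ G.rev t :: C)).getD A.length e = t := by simp
  simp only [flipLoop, hi, ht', hj]
  have hlen :
      (A ++ t :: (B ++ G.rev t :: C)).length - 1 - C.length = A.length + (B.length + 1) := by
    simp only [List.length_append, List.length_cons]; omega
  rw [hlen, show A.length + (B.length + 1) - A.length + 1 = B.length + 2 by omega]
  simp [wconcat, List.take_append, List.drop_append, wrev_cons_append_rev, List.take_of_length_le,
    List.drop_of_length_le]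

lemma exists_flip_decomposition {e : G.DEdge} {l : List G.DEdge} (he : e ∈ l)
    (hre : G.rev e ∈ l) (hl : l.head? = l.getLast?) :
    ∃ A t B C, l = A ++ t :: (B ++ G.rev t :: C) ∧ (∀ g ∈ A, ¬(g = e ∨ g = G.rev e)) ∧
      (t = e ∨ t = G.rev e) ∧ G.rev t ∉ C ∧ C ≠ [] := by
  obtain ⟨t, A, R, hA, ht, rfl, -⟩ :=
    List.exists_of_eraseP he (p := fun g => decide (g = e ∨ g = G.rev e)) (by simp)
  simp only [decide_eq_true_eq] at hA ht
  have hrt : G.rev t = e ∨ G.rev t = G.rev e := by rcases ht with rfl | rfl <;> simp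
  have hR : G.rev t ∈ R := by
    have : G.rev t ∈ A ++ t :: R := by rcases hrt with h | h <;> rw [h] <;> assumption
    rcases List.mem_append.mp this with h | h
    · exact absurd hrt (hA _ h)
    · exact (List.mem_cons.mp h).resolve_left (G.rev_ne_self t)
  obtain ⟨u, C, B, hC, hu, hR', -⟩ := List.exists_of_eraseP (List.mem_reverse.mpr hR)
    (p := fun g => decide (g = G.rev t)) (by simp)
  simp only [decide_eq_true_eq] at hC hu
  subst hu
  obtain rfl : R = B.reverse ++ G.rev t :: C.reverse := by
    simpa using congrArg List.reverse hR'
  refine ⟨A, t, B.reverse, C.reverse, rfl, hA, ht,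
    fun h => hC _ (List.mem_reverse.mp h) rfl, fun hnil => ?_⟩
  rw [hnil, show A ++ t :: (B.reverse ++ [G.rev t]) = (A ++ t :: B.reverse) ++ [G.rev t] by simp,
    List.getLast?_concat] at hl
  rcases A with _ | ⟨a, A⟩ <;> simp at hl
  · exact G.rev_ne_self t hl.symm
  · exact hA a (by simp) (hl ▸ hrt)

lemma mem_of_one_le_visits {l : List G.DEdge} {e : G.DEdge} (h : 1 ≤ G.visits l e) : e ∈ l :=
  List.mem_of_mem_dropLast (List.count_pos_iff.mp h)

lemma one_le_visits_of_eq_or_eq_rev {A B C : List G.DEdge} {t g : G.DEdge} (hC : C ≠ [])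
    (hg : g = t ∨ g = G.rev t) : 1 ≤ G.visits (A ++ t :: (B ++ G.rev t :: C)) g := by
  refine List.count_pos_iff.mpr ?_
  rw [List.dropLast_append_of_ne_nil (by simp), List.dropLast_cons_of_ne_nil (by simp),
    List.dropLast_append_of_ne_nil (by simp), List.dropLast_cons_of_ne_nil hC]
  rcases hg with rfl | rfl <;> simp

lemma isChain_flip {A B C : List G.DEdge} {t : G.DEdge}
    (h : (A ++ t :: (B ++ G.rev t :: C)).IsChain G.Step) :
    (A ++ t :: (G.wrev B ++ G.rev t :: C)).IsChain G.Step := by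
  rw [List.isChain_split, List.isChain_cons_split] at h ⊢
  exact ⟨h.1, G.wrev_cons_append_rev t B ▸ G.isChain_wrev h.2.1, h.2.2⟩

lemma isLoop_flip {A B C : List G.DEdge} {t : G.DEdge}
    (h : G.IsLoop (A ++ t :: (B ++ G.rev t :: C))) (hC : C ≠ []) :
    G.IsLoop (A ++ t :: (G.wrev B ++ G.rev t :: C)) := by
  obtain ⟨⟨-, hchain⟩, -, hends⟩ := h
  have hlen : 0 < C.length := List.length_pos_iff.mpr hC
  have hhead : ∀ M : List G.DEdge, (A ++ t :: M).head? = (A ++ [t]).head? := by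
    intro M; cases A <;> simp
  have hlast : ∀ M : List G.DEdge, (A ++ t :: (M ++ G.rev t :: C)).getLast? = C.getLast? := by
    intro M; simp [List.getLast?_append, List.getLast?_cons, List.getLast?_eq_some_getLast hC]
  refine ⟨⟨by simp; omega, G.isChain_flip hchain⟩, by simp; omega, ?_⟩
  rw [hhead, hlast] at hends ⊢
  exact hends

end PlaneGraph

/-- The map `ℓ ↦ ℓ'` is an involution of the set of loops visiting both a
directed edge `e` and its reversal `-e`; it preserves the length and changes
the sign of the weight: `λ(ℓ') = -λ(ℓ)`. -/
theorem flipLoop_involution (G : PlaneGraph) (x : Sym2 G.V → ℝ) (e : G.DEdge)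
    (l : List G.DEdge)
    (hl : G.IsLoop l ∧ 1 ≤ G.visits l e ∧ 1 ≤ G.visits l (G.rev e)) :
    (G.IsLoop (G.flipLoop e l) ∧ 1 ≤ G.visits (G.flipLoop e l) e ∧
        1 ≤ G.visits (G.flipLoop e l) (G.rev e)) ∧
      G.flipLoop e (G.flipLoop e l) = l ∧
      G.len (G.flipLoop e l) = G.len l ∧
      G.wlam x (G.flipLoop e l) = - G.wlam x l := by
  obtain ⟨hloop, he, hre⟩ := hl
  obtain ⟨A, t, B, C, rfl, hA, ht, hC, hCne⟩ := G.exists_flip_decomposition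
    (G.mem_of_one_le_visits he) (G.mem_of_one_le_visits hre) hloop.2.2
  rw [G.flipLoop_append B hA ht hC, G.flipLoop_append _ hA ht hC, G.wrev_wrev]
  refine ⟨⟨G.isLoop_flip hloop hCne, ?_, ?_⟩, rfl, by simp [PlaneGraph.len, PlaneGraph.wrev],
    G.wlam_flip x hloop.1.2⟩ <;>
  exact G.one_le_visits_of_eq_or_eq_rev hCne (by rcases ht with rfl | rfl <;> simp)
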